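/- Let m ≥ 1 and let I be an ideal of R with dim_ℂ(R/I) = m. Then x^m ∈ I and y^m ∈ I. -/

import Mathlib

noncomputable section

open MvPolynomial

/-- The polynomial ring `ℂ[x,y]`. -/
abbrev Pc : Type := MvPolynomial (Fin 2) ℂ

/-- The ideal `(xy)` of `ℂ[x,y]`. -/
def nodeIdeal : Ideal Pc := Ideal.span {X 0 * X 1}

/-- The affine coordinate ring `ℂ[x,y]/(xy)` of the node. -/
abbrev Anode : Type := Pc ⧸ nodeIdeal

instance : CommRing Anode := Ideal.Quotient.commRing _

/-- The class of `x` in `ℂ[x,y]/(xy)`. -/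
def xA : Anode := Ideal.Quotient.mk nodeIdeal (X 0)

/-- The class of `y` in `ℂ[x,y]/(xy)`. -/
def yA : Anode := Ideal.Quotient.mk nodeIdeal (X 1)

/-- The maximal ideal `(x,y)` of `ℂ[x,y]/(xy)`. -/
def mA : Ideal Anode := Ideal.span {xA, yA}

/-- Evaluation of polynomials at the origin. -/
def evalO : Pc →+* ℂ := (aeval (fun _ => (0:ℂ)) : Pc →ₐ[ℂ] ℂ).toRingHom

lemma node_le_ker : nodeIdeal ≤ RingHom.ker evalO := by
  rw [nodeIdeal, Ideal.span_le, Set.singleton_subset_iff]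
  simp [evalO, RingHom.mem_ker]

/-- Evaluation at the origin, descended to `ℂ[x,y]/(xy)`. -/
def εA : Anode →+* ℂ := Ideal.Quotient.lift nodeIdeal evalO node_le_ker

lemma sub_const_mem (p : Pc) :
    p - C (constantCoeff p) ∈ (Ideal.span {(X 0 : Pc), X 1}) := by
  induction p using MvPolynomial.induction_on with
  | C a => simp
  | add p q hp hq =>
      have : p + q - C (constantCoeff (p + q)) =
          (p - C (constantCoeff p)) + (q - C (constantCoeff q)) := by
        rw [map_add, map_add]; ring
      rw [this]; exact Ideal.add_mem _ hp hq
  | mul_X p i hp =>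
      have h0 : constantCoeff (p * X i) = 0 := by
        rw [map_mul, constantCoeff_X, mul_zero]
      rw [h0, map_zero, sub_zero]
      refine Ideal.mul_mem_left _ p (Ideal.subset_span ?_)
      fin_cases i <;> simp

lemma mA_eq_ker : mA = RingHom.ker εA := by
  apply le_antisymm
  · rw [mA, Ideal.span_le]
    rintro z hz
    simp only [Set.mem_insert_iff, Set.mem_singleton_iff] at hz
    rcases hz with rfl | rfl <;>
      simp [RingHom.mem_ker, xA, yA, εA, evalO, Ideal.Quotient.lift_mk]
  · intro z hz
    obtain ⟨p, rfl⟩ := Ideal.Quotient.mk_surjective z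
    have hev : constantCoeff p = 0 := by
      have : εA (Ideal.Quotient.mk nodeIdeal p) = evalO p := rfl
      rw [RingHom.mem_ker, this] at hz
      simpa [evalO] using hz
    have hp : p ∈ (Ideal.span {(X 0 : Pc), X 1}) := by
      have := sub_const_mem p
      rwa [hev, map_zero, sub_zero] at this
    have : Ideal.Quotient.mk nodeIdeal p ∈
        Ideal.map (Ideal.Quotient.mk nodeIdeal) (Ideal.span {(X 0 : Pc), X 1}) :=
      Ideal.mem_map_of_mem _ hp
    rwa [Ideal.map_span, Set.image_insert_eq, Set.image_singleton] at this

instance : mA.IsPrime := mA_eq_ker ▸ RingHom.ker_isPrime εA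

/-- `R`, the localization of `ℂ[x,y]/(xy)` at the maximal ideal `(x,y)`. -/
abbrev Rnode : Type := Localization.AtPrime mA

/-- The element `x` of `R`. -/
def x : Rnode := algebraMap Anode Rnode xA

/-- The element `y` of `R`. -/
def y : Rnode := algebraMap Anode Rnode yA

instance : Algebra ℂ Rnode :=
  ((algebraMap Anode Rnode).comp (algebraMap ℂ Anode)).toAlgebra

instance (I : Ideal Rnode) : Algebra ℂ (Rnode ⧸ I) := Ideal.Quotient.algebra ℂ

/-! Since `R ⧸ I` is a finite-dimensional local algebra, it is Artinian, so the image of any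
element of the maximal ideal, such as `x` or `y`, is nilpotent. By Cayley–Hamilton, multiplication
by a nilpotent element of an `m`-dimensional algebra has characteristic polynomial `X ^ m`, so its
`m`-th power vanishes. -/

lemma Ideal.Quotient.isNilpotent_mk_of_mem_maximalIdeal {R : Type*} [CommRing R] [IsLocalRing R]
    (I : Ideal R) [IsArtinianRing (R ⧸ I)] {z : R} (hz : z ∈ IsLocalRing.maximalIdeal R) :
    IsNilpotent (Ideal.Quotient.mk I z) := by
  have hjac : Ideal.Quotient.mk I z ∈ Ring.jacobson (R ⧸ I) :=
    Ring.le_comap_jacobson (Ideal.Quotient.mk I) (IsLocalRing.ringJacobson_eq_maximalIdeal R ▸ hz)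
  rw [← Ideal.jacobson_bot, IsArtinianRing.jacobson_eq_radical] at hjac
  exact mem_nilradical.mp hjac

lemma IsNilpotent.pow_finrank_eq_zero {k A : Type*} [Field k] [Ring A] [Module k A]
    [SMulCommClass k A A] [FiniteDimensional k A] {a : A} (ha : IsNilpotent a) :
    a ^ Module.finrank k A = 0 := by
  obtain ⟨n, hn⟩ := ha
  have hmul : IsNilpotent (LinearMap.mulLeft k a) :=
    ⟨n, by rw [LinearMap.pow_mulLeft, hn, LinearMap.mulLeft_zero_eq_zero]⟩
  have hcayley := (LinearMap.mulLeft k a).aeval_self_charpoly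
  rw [hmul.charpoly_eq_X_pow_finrank, map_pow, Polynomial.aeval_X, LinearMap.pow_mulLeft] at hcayley
  simpa using LinearMap.congr_fun hcayley 1

theorem pow_finrank_mem_of_mem_maximalIdeal {k R : Type*} [Field k] [CommRing R] [IsLocalRing R]
    (I : Ideal R) [Module k (R ⧸ I)] [IsScalarTower k (R ⧸ I) (R ⧸ I)]
    [SMulCommClass k (R ⧸ I) (R ⧸ I)] [FiniteDimensional k (R ⧸ I)] {z : R}
    (hz : z ∈ IsLocalRing.maximalIdeal R) : z ^ Module.finrank k (R ⧸ I) ∈ I := by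
  have : IsArtinianRing (R ⧸ I) := .of_finite k (R ⧸ I)
  rw [← Ideal.Quotient.eq_zero_iff_mem, map_pow]
  exact (Ideal.Quotient.isNilpotent_mk_of_mem_maximalIdeal I hz).pow_finrank_eq_zero

set_option synthInstance.maxHeartbeats 1000000 in
theorem pow_mem_of_colength (m : ℕ) (hm : 1 ≤ m) (I : Ideal Rnode)
    (hI : Module.finrank ℂ (Rnode ⧸ I) = m) :
    x ^ m ∈ I ∧ y ^ m ∈ I := by
  have : FiniteDimensional ℂ (Rnode ⧸ I) := Module.finite_of_finrank_pos (by omega)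
  have hmem (a : Anode) (ha : a ∈ mA) : algebraMap Anode Rnode a ^ m ∈ I :=
    hI ▸ pow_finrank_mem_of_mem_maximalIdeal I
      ((IsLocalization.AtPrime.to_map_mem_maximal_iff Rnode mA a).mpr ha)
  exact ⟨hmem xA (Ideal.subset_span (by simp)), hmem yA (Ideal.subset_span (by simp))⟩

end
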